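/- arXiv:1512.04219 — 4 statements merged into one kernel-verified Lean document; each statement's English description precedes it below -/
import Mathlib

section
/- Let r_A and r_B be vectors in ℝ³ with ‖r_A‖ ≤ π and ‖r_B‖ ≤ π, and let R_A = exp(S(r_A)) and R_B = exp(S(r_B)) be the rotation matrices obtained as matrix exponentials of the associated skew-symmetric matrices. Then arccos((trace(R_Bᵀ · R_A) − 1)/2) ≤ ‖r_A − r_B‖, i.e. the angle of the relative rotation R_B⁻¹R_A is at most the Euclidean distance between the multiplied axis-angle representations. -/
open Real Matrix

/-- The skew-symmetric matrix associated to a vector `r ∈ ℝ³`. -/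
noncomputable def skew (r : EuclideanSpace ℝ (Fin 3)) : Matrix (Fin 3) (Fin 3) ℝ :=
  !![0, -(r 2), r 1;
     r 2, 0, -(r 0);
     -(r 1), r 0, 0]

/-!
The rotation `exp (skew r)` is represented by the unit quaternion
`q r = (cos (‖r‖/2), sin (‖r‖/2) • r / ‖r‖)`: the exponential series collapses, because
`skew r ^ 3 = -‖r‖² • skew r`, to the Euler–Rodrigues formula, and from it
`trace (R_Bᵀ R_A) = 4 ⟪q rA, q rB⟫² - 1`. As `cos D = 2 cos² (D/2) - 1`, it suffices to show
`cos (‖rA - rB‖/2) ≤ ⟪q rA, q rB⟫`.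

With half-angles `A = ‖rA‖/2`, `B = ‖rB‖/2` and `x` the cosine of the angle between `rA` and
`rB`, the right side is `cos A cos B + x sin A sin B`, while
`(‖rA - rB‖/2)² = A² + B² - 2ABx = (1+x)/2 (A-B)² + (1-x)/2 (A+B)²`. Convexity of `t ↦ cos √t`
on `[0, π²]`, i.e. the monotonicity of `sin u / u` on `(0, π]`, then gives the inequality.
-/

open Set
open scoped Nat RealInnerProductSpace Quaternion

local notation "ℝ³" => EuclideanSpace ℝ (Fin 3)

section Rodrigues

variable {A : Type*} [Ring A] [Algebra ℝ A]

theorem pow_two_mul_add_one_of_pow_three {X : A} {c : ℝ} (hX : X ^ 3 = c • X) (k : ℕ) :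
    X ^ (2 * k + 1) = c ^ k • X := by
  induction k with
  | zero => simp
  | succ k ih =>
    rw [show 2 * (k + 1) + 1 = 2 + (2 * k + 1) by ring, pow_add, ih, mul_smul_comm, ← pow_succ,
      hX, smul_smul, pow_succ]

variable [TopologicalSpace A] [IsTopologicalRing A] [ContinuousSMul ℝ A] [T2Space A]

theorem exp_eq_of_pow_three {X : A} {θ : ℝ} (hθ : θ ≠ 0) (hX : X ^ 3 = -θ ^ 2 • X) :
    NormedSpace.exp X = 1 + (sin θ / θ) • X + ((1 - cos θ) / θ ^ 2) • X ^ 2 := by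
  have hpow := pow_two_mul_add_one_of_pow_three hX
  have hodd : HasSum (fun k : ℕ ↦ ((2 * k + 1)! : ℝ)⁻¹ • X ^ (2 * k + 1)) ((sin θ / θ) • X) := by
    convert ((hasSum_sin θ).div_const θ).smul_const X using 2 with k
    rw [hpow, smul_smul, neg_pow, ← pow_mul, pow_succ]
    field_simp
  have heven : HasSum (fun k : ℕ ↦ ((2 * k)! : ℝ)⁻¹ • X ^ (2 * k))
      (1 + ((1 - cos θ) / θ ^ 2) • X ^ 2) := by
    have hcos := (hasSum_nat_add_iff' 1).mpr (hasSum_cos θ)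
    simp only [Finset.sum_range_one, mul_zero, pow_zero, Nat.factorial_zero, Nat.cast_one,
      div_one, mul_one] at hcos
    have hshift : HasSum (fun k : ℕ ↦ ((2 * (k + 1))! : ℝ)⁻¹ • X ^ (2 * (k + 1)))
        (((1 - cos θ) / θ ^ 2) • X ^ 2) := by
      convert (hcos.neg.div_const (θ ^ 2)).smul_const (X ^ 2) using 2 with k
      · rw [show 2 * (k + 1) = 2 * k + 1 + 1 by ring, pow_succ, hpow, smul_mul_assoc, ← pow_two,
          smul_smul, neg_pow, ← pow_mul]
        congr 1
        field_simp
        ring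
      · ring
    have h := hshift.zero_add (f := fun k : ℕ ↦ ((2 * k)! : ℝ)⁻¹ • X ^ (2 * k))
    rwa [mul_zero, pow_zero, Nat.factorial_zero, Nat.cast_one, inv_one, one_smul] at h
  have hexp : HasSum (fun n : ℕ ↦ (n ! : ℝ)⁻¹ • X ^ n)
      (1 + ((1 - cos θ) / θ ^ 2) • X ^ 2 + (sin θ / θ) • X) := heven.even_add_odd hodd
  rw [NormedSpace.exp_eq_tsum ℝ]
  exact hexp.tsum_eq.trans (by abel)

end Rodrigues

theorem norm_sq_eq_fin_three (r : ℝ³) : ‖r‖ ^ 2 = r 0 ^ 2 + r 1 ^ 2 + r 2 ^ 2 := by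
  simp [EuclideanSpace.real_norm_sq_eq, Fin.sum_univ_three]

theorem inner_eq_fin_three (a b : ℝ³) : ⟪a, b⟫ = a 0 * b 0 + a 1 * b 1 + a 2 * b 2 := by
  simp [PiLp.inner_apply, Fin.sum_univ_three, mul_comm]

theorem skew_zero : skew 0 = 0 := by
  ext i j
  fin_cases i <;> fin_cases j <;> simp [skew]

theorem skew_pow_three (r : ℝ³) : skew r ^ 3 = -‖r‖ ^ 2 • skew r := by
  rw [norm_sq_eq_fin_three, pow_succ, sq]
  ext i j
  fin_cases i <;> fin_cases j <;> simp [skew, Matrix.mul_apply, Fin.sum_univ_three] <;> ring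

theorem exp_skew (r : ℝ³) :
    NormedSpace.exp (skew r) = 1 + (2 * cos (‖r‖ / 2) * (sin (‖r‖ / 2) / ‖r‖)) • skew r
      + (2 * (sin (‖r‖ / 2) / ‖r‖) ^ 2) • skew r ^ 2 := by
  rcases eq_or_ne r 0 with rfl | hr
  · simp [skew_zero]
  rw [exp_eq_of_pow_three (norm_ne_zero_iff.mpr hr) (skew_pow_three r)]
  have hsin : sin ‖r‖ = 2 * sin (‖r‖ / 2) * cos (‖r‖ / 2) := by
    rw [← sin_two_mul, mul_div_cancel₀ _ two_ne_zero]
  have hcos : cos ‖r‖ = 1 - 2 * sin (‖r‖ / 2) ^ 2 := by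
    rw [← cos_two_mul_eq_one_sub, mul_div_cancel₀ _ two_ne_zero]
  rw [hsin, hcos]
  module

theorem trace_transpose_mul_of_skew (a b : ℝ³) (f g f' g' : ℝ) :
    trace ((1 + f' • skew b + g' • skew b ^ 2)ᵀ * (1 + f • skew a + g • skew a ^ 2)) =
      3 - 2 * g' * ‖b‖ ^ 2 - 2 * g * ‖a‖ ^ 2 + 2 * f * f' * ⟪a, b⟫
        + g * g' * (⟪a, b⟫ ^ 2 + ‖a‖ ^ 2 * ‖b‖ ^ 2) := by
  rw [norm_sq_eq_fin_three, norm_sq_eq_fin_three, inner_eq_fin_three]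
  simp [sq, Matrix.trace, Matrix.mul_apply, Fin.sum_univ_three, skew, Matrix.one_apply]
  ring

/-- At `r = 0` the vector part is `0`, as `x / 0 = 0`. -/
noncomputable def unitQuaternion (r : ℝ³) : ℍ[ℝ] :=
  ⟨cos (‖r‖ / 2), sin (‖r‖ / 2) / ‖r‖ * r 0, sin (‖r‖ / 2) / ‖r‖ * r 1,
    sin (‖r‖ / 2) / ‖r‖ * r 2⟩

theorem inner_unitQuaternion (a b : ℝ³) :
    ⟪unitQuaternion a, unitQuaternion b⟫ = cos (‖a‖ / 2) * cos (‖b‖ / 2)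
      + sin (‖a‖ / 2) / ‖a‖ * (sin (‖b‖ / 2) / ‖b‖) * ⟪a, b⟫ := by
  rw [Quaternion.inner_def, Quaternion.re_mul, Quaternion.re_star, Quaternion.imI_star,
    Quaternion.imJ_star, Quaternion.imK_star, inner_eq_fin_three]
  simp only [unitQuaternion]
  ring

theorem sin_half_norm_div_norm_mul_norm (r : ℝ³) : sin (‖r‖ / 2) / ‖r‖ * ‖r‖ = sin (‖r‖ / 2) :=
  div_mul_cancel_of_imp fun h ↦ by simp [h]

theorem trace_exp_skew_transpose_mul_exp_skew (a b : ℝ³) :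
    trace ((NormedSpace.exp (skew b))ᵀ * NormedSpace.exp (skew a)) =
      4 * ⟪unitQuaternion a, unitQuaternion b⟫ ^ 2 - 1 := by
  rw [exp_skew, exp_skew, trace_transpose_mul_of_skew, inner_unitQuaternion]
  have ha := sin_sq_add_cos_sq (‖a‖ / 2)
  have hb := sin_sq_add_cos_sq (‖b‖ / 2)
  rw [← sin_half_norm_div_norm_mul_norm a] at ha
  rw [← sin_half_norm_div_norm_mul_norm b] at hb
  linear_combination (-4 * (1 - (sin (‖b‖ / 2) / ‖b‖ * ‖b‖) ^ 2)) * ha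
    - 4 * cos (‖a‖ / 2) ^ 2 * hb

theorem antitoneOn_sin_div : AntitoneOn (fun u ↦ sin u / u) (Ioc 0 π) := by
  intro x hx y hy hxy
  have h := strictConcaveOn_sin_Icc.concaveOn.neg.secant_mono (a := 0) ⟨le_rfl, pi_pos.le⟩
    (Ioc_subset_Icc_self hx) (Ioc_subset_Icc_self hy) hx.1.ne' hy.1.ne' hxy
  simp only [Pi.neg_apply, sin_zero, neg_zero, sub_zero, neg_div] at h
  exact neg_le_neg_iff.mp h

theorem hasDerivAt_cos_sqrt {t : ℝ} (ht : 0 < t) :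
    HasDerivAt (fun s ↦ cos √s) (-(sin √t / √t) / 2) t := by
  convert (hasDerivAt_sqrt ht.ne').cos using 1
  field_simp

theorem convexOn_cos_sqrt : ConvexOn ℝ (Icc 0 (π ^ 2)) (fun t ↦ cos √t) := by
  refine MonotoneOn.convexOn_of_deriv (convex_Icc _ _) (by fun_prop) ?_ ?_ <;> rw [interior_Icc]
  · exact fun t ht ↦ (hasDerivAt_cos_sqrt ht.1).differentiableAt.differentiableWithinAt
  · intro s hs t ht hst
    have hsqrt : ∀ u ∈ Ioo 0 (π ^ 2), √u ∈ Ioc 0 π := fun u hu ↦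
      ⟨sqrt_pos.mpr hu.1, (sqrt_le_left pi_pos.le).mpr hu.2.le⟩
    rw [(hasDerivAt_cos_sqrt hs.1).deriv, (hasDerivAt_cos_sqrt ht.1).deriv]
    have := antitoneOn_sin_div (hsqrt s hs) (hsqrt t ht) (sqrt_le_sqrt hst)
    linarith

theorem cos_le_cos_mul_cos_add_mul_sin_mul_sin {A B x D : ℝ} (hA : 0 ≤ A) (hB : 0 ≤ B)
    (hAB : A + B ≤ π) (hx : |x| ≤ 1) (hD : 0 ≤ D) (hD2 : D ^ 2 = A ^ 2 + B ^ 2 - 2 * A * B * x) :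
    cos D ≤ cos A * cos B + x * sin A * sin B := by
  obtain ⟨hx₁, hx₂⟩ := abs_le.mp hx
  have hmem : ∀ u, |u| ≤ π → u ^ 2 ∈ Icc 0 (π ^ 2) := fun u hu ↦
    ⟨sq_nonneg u, sq_le_sq' (abs_le.mp hu).1 (abs_le.mp hu).2⟩
  have h := convexOn_cos_sqrt.2 (hmem (A - B) (by rw [abs_le]; constructor <;> linarith))
    (hmem (A + B) (by rw [abs_le]; constructor <;> linarith))
    (show 0 ≤ (1 + x) / 2 by linarith) (show 0 ≤ (1 - x) / 2 by linarith) (by ring)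
  simp only [smul_eq_mul, sqrt_sq_eq_abs, cos_abs] at h
  calc cos D = cos √((1 + x) / 2 * (A - B) ^ 2 + (1 - x) / 2 * (A + B) ^ 2) := by
        rw [← sqrt_sq hD, hD2]; congr 2; ring
    _ ≤ (1 + x) / 2 * cos (A - B) + (1 - x) / 2 * cos (A + B) := h
    _ = cos A * cos B + x * sin A * sin B := by rw [cos_sub, cos_add]; ring

theorem cos_half_norm_sub_le_inner_unitQuaternion {a b : ℝ³} (ha : ‖a‖ ≤ π) (hb : ‖b‖ ≤ π) :
    cos (‖a - b‖ / 2) ≤ ⟪unitQuaternion a, unitQuaternion b⟫ := by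
  have hCS : |⟪a, b⟫| ≤ ‖a‖ * ‖b‖ := abs_real_inner_le_norm a b
  have hx : |⟪a, b⟫ / (‖a‖ * ‖b‖)| ≤ 1 := by
    rw [abs_div, abs_of_nonneg (mul_nonneg (norm_nonneg a) (norm_nonneg b))]
    exact div_le_one_of_le₀ hCS (by positivity)
  have hp : ⟪a, b⟫ / (‖a‖ * ‖b‖) * (‖a‖ * ‖b‖) = ⟪a, b⟫ :=
    div_mul_cancel_of_imp fun h ↦ abs_nonpos_iff.mp (h ▸ hCS)
  have hD2 := norm_sub_sq_real a b
  calc cos (‖a - b‖ / 2)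
      ≤ cos (‖a‖ / 2) * cos (‖b‖ / 2)
          + ⟪a, b⟫ / (‖a‖ * ‖b‖) * sin (‖a‖ / 2) * sin (‖b‖ / 2) :=
        cos_le_cos_mul_cos_add_mul_sin_mul_sin (by positivity) (by positivity) (by linarith) hx
          (by positivity) (by linear_combination hD2 / 4 + hp / 2)
    _ = ⟪unitQuaternion a, unitQuaternion b⟫ := by rw [inner_unitQuaternion]; ring

theorem angle_relative_rotation_le_dist
    (rA rB : EuclideanSpace ℝ (Fin 3)) (hA : ‖rA‖ ≤ π) (hB : ‖rB‖ ≤ π) :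
    Real.arccos ((Matrix.trace ((NormedSpace.exp (skew rB))ᵀ * NormedSpace.exp (skew rA)) - 1) / 2)
      ≤ ‖rA - rB‖ := by
  rcases lt_or_ge π ‖rA - rB‖ with hD | hD
  · exact (arccos_le_pi _).trans hD.le
  have hhalf := cos_half_norm_sub_le_inner_unitQuaternion hA hB
  have hhalf_nonneg : 0 ≤ cos (‖rA - rB‖ / 2) :=
    cos_nonneg_of_mem_Icc ⟨by linarith [norm_nonneg (rA - rB), pi_pos], by linarith⟩
  have hdouble : cos ‖rA - rB‖ = 2 * cos (‖rA - rB‖ / 2) ^ 2 - 1 := by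
    rw [← cos_two_mul, mul_div_cancel₀ _ two_ne_zero]
  calc arccos ((trace ((NormedSpace.exp (skew rB))ᵀ * NormedSpace.exp (skew rA)) - 1) / 2)
      ≤ arccos (cos ‖rA - rB‖) := by
        refine arccos_le_arccos ?_
        rw [trace_exp_skew_transpose_mul_exp_skew, hdouble]
        nlinarith
    _ = ‖rA - rB‖ := arccos_cos (norm_nonneg _) hD
end

section
/- For all a', b' ∈ [0, 1] and all d ∈ [0, 1]: (arccos(d·a' + (1 − d)·b'))² ≤ d·(arccos a')² + (1 − d)·(arccos b')². That is, the function x ↦ (arccos x)² is midpoint-to-general convex on [0, 1]. -/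
/-!
With `θ = arccos x` the derivative of `arccos²` is `-2 θ / sin θ`, and its derivative in turn has
the sign of `sin θ - θ cos θ`, which is positive on `(0, π)` (this is `θ < tan θ` below `π / 2`, and
trivial beyond). So `arccos²` has an increasing derivative, hence is convex, on all of `[-1, 1]`.
-/

open Real Set

namespace Real

lemma mul_cos_lt_sin {θ : ℝ} (h0 : 0 < θ) (hπ : θ < π) : θ * cos θ < sin θ := by
  have hsin : 0 < sin θ := sin_pos_of_pos_of_lt_pi h0 hπ
  rcases lt_or_ge θ (π / 2) with hθ | hθ
  · have hcos : 0 < cos θ := cos_pos_of_mem_Ioo ⟨by linarith, hθ⟩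
    have htan : θ < sin θ / cos θ := tan_eq_sin_div_cos θ ▸ lt_tan h0 hθ
    exact (lt_div_iff₀ hcos).1 htan
  · have hcos : cos θ ≤ 0 := cos_nonpos_of_pi_div_two_le_of_le hθ (by linarith)
    nlinarith

lemma mul_arccos_lt_sqrt_one_sub_sq {x : ℝ} (hx : x ∈ Ioo (-1) 1) :
    x * arccos x < √(1 - x ^ 2) := by
  have h := mul_cos_lt_sin (arccos_pos.2 hx.2) (arccos_lt_pi.2 hx.1)
  rwa [cos_arccos hx.1.le hx.2.le, sin_arccos, mul_comm] at h

lemma sqrt_one_sub_sq_pos {x : ℝ} (hx : x ∈ Ioo (-1) 1) : 0 < √(1 - x ^ 2) :=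
  sqrt_pos.2 (by nlinarith [hx.1, hx.2])

lemma hasDerivAt_arccos_sq {x : ℝ} (hx : x ∈ Ioo (-1) 1) :
    HasDerivAt (fun y => arccos y ^ 2) (-(2 * (arccos x / √(1 - x ^ 2)))) x := by
  refine ((hasDerivAt_arccos hx.1.ne' hx.2.ne).pow 2).congr_deriv ?_
  field_simp
  ring

lemma hasDerivAt_arccos_div_sqrt {x : ℝ} (hx : x ∈ Ioo (-1) 1) :
    HasDerivAt (fun y => arccos y / √(1 - y ^ 2))
      ((x * arccos x - √(1 - x ^ 2)) / √(1 - x ^ 2) ^ 3) x := by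
  have hs := (sqrt_one_sub_sq_pos hx).ne'
  have hsq : HasDerivAt (fun y => √(1 - y ^ 2)) (-(2 * x) / (2 * √(1 - x ^ 2))) x :=
    (((hasDerivAt_pow 2 x).const_sub 1).sqrt (by nlinarith [hx.1, hx.2])).congr_deriv (by ring)
  refine ((hasDerivAt_arccos hx.1.ne' hx.2.ne).div hsq hs).congr_deriv ?_
  field_simp
  ring

lemma strictAntiOn_arccos_div_sqrt :
    StrictAntiOn (fun x => arccos x / √(1 - x ^ 2)) (Ioo (-1) 1) := by
  refine strictAntiOn_of_deriv_neg (convex_Ioo _ _)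
    (fun x hx => (hasDerivAt_arccos_div_sqrt hx).continuousAt.continuousWithinAt) ?_
  intro x hx
  rw [interior_Ioo] at hx
  rw [(hasDerivAt_arccos_div_sqrt hx).deriv]
  exact div_neg_of_neg_of_pos (sub_neg.2 (mul_arccos_lt_sqrt_one_sub_sq hx))
    (pow_pos (sqrt_one_sub_sq_pos hx) 3)

theorem strictConvexOn_arccos_sq : StrictConvexOn ℝ (Icc (-1) 1) (fun x => arccos x ^ 2) := by
  refine StrictMonoOn.strictConvexOn_of_deriv (convex_Icc _ _)
    (continuous_arccos.pow 2).continuousOn ?_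
  rw [interior_Icc]
  intro x hx y hy hxy
  rw [(hasDerivAt_arccos_sq hx).deriv, (hasDerivAt_arccos_sq hy).deriv]
  linarith [strictAntiOn_arccos_div_sqrt hx hy hxy]

end Real

theorem arccos_sq_convex_combination (a b d : ℝ)
    (ha : a ∈ Set.Icc (0 : ℝ) 1) (hb : b ∈ Set.Icc (0 : ℝ) 1) (hd : d ∈ Set.Icc (0 : ℝ) 1) :
    (Real.arccos (d * a + (1 - d) * b)) ^ 2
      ≤ d * (Real.arccos a) ^ 2 + (1 - d) * (Real.arccos b) ^ 2 := by
  have hsub : Icc (0 : ℝ) 1 ⊆ Icc (-1) 1 := Icc_subset_Icc (by norm_num) le_rfl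
  simpa using strictConvexOn_arccos_sq.convexOn.2 (hsub ha) (hsub hb) hd.1 (sub_nonneg.2 hd.2)
    (add_sub_cancel d 1)
end

section
/- The function f(x) = (arccos x)² is convex on the interval [0, 1]. -/
/-!
On `(-1, 1)` the derivative of `arccos ^ 2` is `-2 θ / sin θ` with `θ = arccos x`. Concavity of
`sin` on `[0, π]` together with `sin 0 = 0` makes `sin θ / θ` decreasing, so `θ / sin θ` increases
with `θ`; as `arccos` is decreasing, the derivative is increasing in `x`. Hence `arccos ^ 2` is
convex on all of `[-1, 1]`, in particular on `[0, 1]`.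
-/

open Real Set

theorem strictMonoOn_div_sin : StrictMonoOn (fun θ => θ / sin θ) (Ioo 0 π) := by
  intro a ha b hb hab
  have hsin_div : sin b / b < sin a / a := by
    simpa using strictConcaveOn_sin_Icc.secant_strict_mono (a := 0) ⟨le_rfl, pi_pos.le⟩
      (Ioo_subset_Icc_self ha) (Ioo_subset_Icc_self hb) ha.1.ne' hb.1.ne' hab
  have hpos : 0 < sin b / b := div_pos (sin_pos_of_pos_of_lt_pi hb.1 hb.2) hb.1
  simpa only [inv_div] using inv_strictAnti₀ hpos hsin_div

theorem antitoneOn_arccos_div_sin_arccos :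
    AntitoneOn (fun x => arccos x / sin (arccos x)) (Ioo (-1) 1) := by
  have hmaps : MapsTo arccos (Ioo (-1) 1) (Ioo 0 π) :=
    fun _ hx => ⟨arccos_pos.2 hx.2, arccos_lt_pi.2 hx.1⟩
  exact fun x hx y hy hxy =>
    strictMonoOn_div_sin.monotoneOn (hmaps hy) (hmaps hx) (arccos_le_arccos hxy)

theorem hasDerivAt_arccos_sq {x : ℝ} (h₁ : x ≠ -1) (h₂ : x ≠ 1) :
    HasDerivAt (fun x => arccos x ^ 2) (-2 * (arccos x / sin (arccos x))) x := by
  refine ((hasDerivAt_arccos h₁ h₂).pow 2).congr_deriv ?_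
  rw [sin_arccos]
  ring

theorem convexOn_arccos_sq : ConvexOn ℝ (Icc (-1) 1) (fun x => arccos x ^ 2) := by
  have hderiv : ∀ x ∈ Ioo (-1 : ℝ) 1,
      HasDerivAt (fun x => arccos x ^ 2) (-2 * (arccos x / sin (arccos x))) x :=
    fun x hx => hasDerivAt_arccos_sq hx.1.ne' hx.2.ne
  refine MonotoneOn.convexOn_of_deriv (convex_Icc _ _) (continuous_arccos.pow 2).continuousOn
    ?_ ?_ <;> rw [interior_Icc]
  · exact fun x hx => (hderiv x hx).differentiableAt.differentiableWithinAt
  · intro x hx y hy hxy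
    rw [(hderiv x hx).deriv, (hderiv y hy).deriv]
    linarith [antitoneOn_arccos_div_sin_arccos hx hy hxy]

theorem arccos_sq_convexOn :
    ConvexOn ℝ (Set.Icc (0 : ℝ) 1) (fun x => (Real.arccos x) ^ 2) :=
  convexOn_arccos_sq.subset (Icc_subset_Icc (by norm_num) le_rfl) (convex_Icc 0 1)
end

section
/- Let q_A and q_B be unit quaternions representing rotations by angles α, β ∈ [0, π] about unit axes a_A, a_B ∈ ℝ³ (so q_A has real part cos(α/2) and imaginary part sin(α/2)·a_A, and similarly for q_B), and let r_A = α·a_A, r_B = β·a_B ∈ ℝ³ with ‖r_A‖, ‖r_B‖ ≤ π. Then 2·arccos|Re(q_B · q_A)| ≤ ‖r_A + r_B‖, i.e. the angle of the rotation represented by the product quaternion q_B·q_A is at most the Euclidean distance from r_A to −r_B. -/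
/-!
Write `a = α/2`, `b = β/2` and `d = ⟪a_A, a_B⟫`. Then `Re (q_B q_A) = cos a cos b - d sin a sin b`
and `(‖r_A + r_B‖/2)² = a² + b² + 2abd`. Since `1 ± d ≥ 0`, the real part is the convex combination
`(1-d)/2 · cos (a-b) + (1+d)/2 · cos (a+b)`, while `a² + b² + 2abd` is the same combination of
`(a-b)²` and `(a+b)²`. The function `x ↦ cos √x` is convex on `[0, π²]`, so
`cos (‖r_A + r_B‖/2) ≤ Re (q_B q_A)`, and `arccos` is antitone.
-/

open Real

namespace Real

lemma mul_cos_le_sin {y : ℝ} (h0 : 0 ≤ y) (hπ : y ≤ π) : y * cos y ≤ sin y := by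
  rcases le_or_gt (cos y) 0 with hc | hc
  · exact (mul_nonpos_of_nonneg_of_nonpos h0 hc).trans (sin_nonneg_of_nonneg_of_le_pi h0 hπ)
  · have hy : y < π / 2 := by
      by_contra! h
      exact hc.not_ge (cos_nonpos_of_pi_div_two_le_of_le h (by linarith [pi_pos]))
    have := le_tan h0 hy
    rwa [tan_eq_sin_div_cos, le_div_iff₀ hc] at this

lemma hasDerivAt_cos_sqrt {x : ℝ} (hx : 0 < x) :
    HasDerivAt (fun x ↦ cos √x) (-sin √x / (2 * √x)) x := by
  convert (hasDerivAt_sqrt hx.ne').cos using 1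
  ring

lemma hasDerivAt_neg_sin_sqrt_div {x : ℝ} (hx : 0 < x) :
    HasDerivAt (fun x ↦ -sin √x / (2 * √x)) ((sin √x - √x * cos √x) / (4 * √x ^ 3)) x := by
  have hs : 0 < √x := sqrt_pos.mpr hx
  have hsqrt := hasDerivAt_sqrt hx.ne'
  refine (hsqrt.sin.fun_neg.fun_div (hsqrt.const_mul 2) (by positivity)).congr_deriv ?_
  field_simp
  ring

lemma convexOn_cos_sqrt : ConvexOn ℝ (Set.Icc 0 (π ^ 2)) (fun x ↦ cos √x) := by
  refine convexOn_of_hasDerivWithinAt2_nonneg (convex_Icc _ _) (by fun_prop)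
    (f' := fun x ↦ -sin √x / (2 * √x)) (f'' := fun x ↦ (sin √x - √x * cos √x) / (4 * √x ^ 3))
    (fun x hx ↦ ?_) (fun x hx ↦ ?_) (fun x hx ↦ ?_) <;> rw [interior_Icc] at hx
  · exact (hasDerivAt_cos_sqrt hx.1).hasDerivWithinAt
  · exact (hasDerivAt_neg_sin_sqrt_div hx.1).hasDerivWithinAt
  · have hs : 0 < √x := sqrt_pos.mpr hx.1
    have hsπ : √x ≤ π := (sqrt_le_left pi_pos.le).mpr hx.2.le
    have := mul_cos_le_sin hs.le hsπ
    exact div_nonneg (by linarith) (by positivity)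

lemma cos_sqrt_le_cos_mul_cos_sub_sin_mul_sin {a b d : ℝ} (ha : 0 ≤ a) (hb : 0 ≤ b)
    (hab : a + b ≤ π) (hd : |d| ≤ 1) :
    cos √(a ^ 2 + b ^ 2 + 2 * a * b * d) ≤ cos a * cos b - sin a * sin b * d := by
  obtain ⟨hd₁, hd₂⟩ := abs_le.mp hd
  have hsub : (a - b) ^ 2 ∈ Set.Icc 0 (π ^ 2) := ⟨sq_nonneg _, by nlinarith⟩
  have hadd : (a + b) ^ 2 ∈ Set.Icc 0 (π ^ 2) := ⟨sq_nonneg _, by nlinarith⟩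
  have hconv := convexOn_cos_sqrt.2 hsub hadd (by linarith : (0 : ℝ) ≤ (1 - d) / 2)
    (by linarith : (0 : ℝ) ≤ (1 + d) / 2) (by ring)
  simp only [smul_eq_mul, sqrt_sq_eq_abs, cos_abs] at hconv
  calc cos √(a ^ 2 + b ^ 2 + 2 * a * b * d)
      = cos √((1 - d) / 2 * (a - b) ^ 2 + (1 + d) / 2 * (a + b) ^ 2) := by ring_nf
    _ ≤ (1 - d) / 2 * cos (a - b) + (1 + d) / 2 * cos (a + b) := hconv
    _ = cos a * cos b - sin a * sin b * d := by rw [cos_sub, cos_add]; ring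

lemma arccos_le_of_cos_le {x t : ℝ} (ht₀ : 0 ≤ t) (htπ : t ≤ π) (h : cos t ≤ x) :
    arccos x ≤ t :=
  arccos_cos ht₀ htπ ▸ arccos_le_arccos h

end Real

lemma norm_smul_add_smul_sq {E : Type*} [NormedAddCommGroup E] [InnerProductSpace ℝ E]
    {u v : E} (hu : ‖u‖ = 1) (hv : ‖v‖ = 1) (α β : ℝ) :
    ‖α • u + β • v‖ ^ 2 = α ^ 2 + β ^ 2 + 2 * α * β * inner ℝ u v := by
  rw [norm_add_sq_real, norm_smul, norm_smul, hu, hv, real_inner_smul_left,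
    real_inner_smul_right, Real.norm_eq_abs, Real.norm_eq_abs]
  simp only [mul_one, sq_abs]
  ring

theorem quaternion_angle_composed_le_dist_general
    (aA aB : EuclideanSpace ℝ (Fin 3)) (hA : ‖aA‖ = 1) (hB : ‖aB‖ = 1)
    (α β : ℝ) (hα : α ∈ Set.Icc 0 π) (hβ : β ∈ Set.Icc 0 π)
    (qA qB : Quaternion ℝ)
    (hqA : qA = ⟨Real.cos (α / 2), Real.sin (α / 2) * aA 0, Real.sin (α / 2) * aA 1,
                 Real.sin (α / 2) * aA 2⟩)
    (hqB : qB = ⟨Real.cos (β / 2), Real.sin (β / 2) * aB 0, Real.sin (β / 2) * aB 1,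
                 Real.sin (β / 2) * aB 2⟩)
    (rA rB : EuclideanSpace ℝ (Fin 3)) (hrA : rA = α • aA) (hrB : rB = β • aB) :
    2 * Real.arccos |(qB * qA).re| ≤ ‖rA + rB‖ := by
  obtain ⟨hα₀, hαπ⟩ := hα
  obtain ⟨hβ₀, hβπ⟩ := hβ
  set d := inner ℝ aA aB with hd_def
  have hd : |d| ≤ 1 := by simpa [hA, hB] using abs_real_inner_le_norm aA aB
  have hre : (qB * qA).re = cos (α / 2) * cos (β / 2) - sin (α / 2) * sin (β / 2) * d := by
    rw [Quaternion.re_mul, hqA, hqB]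
    simp only [d, PiLp.inner_apply, Fin.sum_univ_three, RCLike.inner_apply, conj_trivial]
    ring
  have hnorm : ‖rA + rB‖ / 2 = √((α / 2) ^ 2 + (β / 2) ^ 2 + 2 * (α / 2) * (β / 2) * d) := by
    rw [← sqrt_sq (div_nonneg (norm_nonneg (rA + rB)) zero_le_two), div_pow,
      hrA, hrB, norm_smul_add_smul_sq hA hB, ← hd_def]
    ring_nf
  have hcos : cos (‖rA + rB‖ / 2) ≤ (qB * qA).re := hre ▸ hnorm ▸
    cos_sqrt_le_cos_mul_cos_sub_sin_mul_sin (by positivity) (by positivity) (by linarith) hd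
  have hdist : ‖rA + rB‖ ≤ 2 * π := by
    calc ‖rA + rB‖ ≤ ‖rA‖ + ‖rB‖ := norm_add_le _ _
      _ = α + β := by
        rw [hrA, hrB, norm_smul, norm_smul, hA, hB, norm_of_nonneg hα₀, norm_of_nonneg hβ₀,
          mul_one, mul_one]
      _ ≤ 2 * π := by linarith
  have := arccos_le_of_cos_le (by positivity) (by linarith) (hcos.trans (le_abs_self _))
  linarith

theorem quaternion_angle_composed_le_dist
    (aA aB : EuclideanSpace ℝ (Fin 3)) (hA : ‖aA‖ = 1) (hB : ‖aB‖ = 1)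
    (α β : ℝ) (hα : α ∈ Set.Icc 0 π) (hβ : β ∈ Set.Icc 0 π)
    (qA qB : Quaternion ℝ)
    (hqA : qA = ⟨Real.cos (α / 2), Real.sin (α / 2) * aA 0, Real.sin (α / 2) * aA 1,
                 Real.sin (α / 2) * aA 2⟩)
    (hqB : qB = ⟨Real.cos (β / 2), Real.sin (β / 2) * aB 0, Real.sin (β / 2) * aB 1,
                 Real.sin (β / 2) * aB 2⟩)
    (rA rB : EuclideanSpace ℝ (Fin 3)) (hrA : rA = α • aA) (hrB : rB = β • aB)
    (hrAn : ‖rA‖ ≤ π) (hrBn : ‖rB‖ ≤ π) :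
    2 * Real.arccos |(qB * qA).re| ≤ ‖rA + rB‖ :=
  quaternion_angle_composed_le_dist_general aA aB hA hB α β hα hβ qA qB hqA hqB rA rB hrA hrB
end
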